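/- Every non-trivial element of F(N) has infinite order: if f ∈ F(N) and f is not the identity map of [0,1], then for every integer n ≥ 1 the n-fold composition of f with itself is not the identity map. -/
import Mathlib


/-- A real number is an `N`-adic rational if it equals `k / N^m` for some `k : ℤ`, `m : ℕ`. -/
def IsNAdic (N : ℕ) (x : ℝ) : Prop :=
  ∃ (k : ℤ) (m : ℕ), x = (k : ℝ) / (N : ℝ) ^ m

/-- Membership (as a map of `[0,1]`) in the generalized Thompson group `F(N)`:
`f 0 = 0`, `f 1 = 1`, and there is a finite partition `0 = a 0 < a 1 < ⋯ < a n = 1`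
of `[0,1]` by `N`-adic rationals such that on each piece `[a i, a (i+1)]` the map `f`
is affine with slope an integer power of `N`.  (Such an `f` is automatically an
increasing piecewise-linear homeomorphism of `[0,1]` onto itself, with all
non-differentiability points `N`-adic.) -/
def InFN (N : ℕ) (f : ℝ → ℝ) : Prop :=
  f 0 = 0 ∧ f 1 = 1 ∧
    ∃ (n : ℕ) (a : ℕ → ℝ), 0 < n ∧ a 0 = 0 ∧ a n = 1 ∧
      (∀ i < n, a i < a (i + 1)) ∧
      (∀ i ≤ n, IsNAdic N (a i)) ∧
      (∀ i < n, ∃ q : ℤ, ∀ x ∈ Set.Icc (a i) (a (i + 1)),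
        f x = f (a i) + (N : ℝ) ^ q * (x - a i))

/-- Every non-trivial element of `F(N)` has infinite order: if `f ∈ F(N)`
is not the identity map of `[0,1]`, then for every `n ≥ 1` the `n`-fold composition of `f`
with itself is not the identity map of `[0,1]`. -/
theorem statement2 (N : ℕ) (hN : 2 ≤ N) (f : ℝ → ℝ) (hf : InFN N f)
    (hne : ∃ x ∈ Set.Icc (0 : ℝ) 1, f x ≠ x) :
    ∀ n : ℕ, 1 ≤ n → ∃ x ∈ Set.Icc (0 : ℝ) 1, f^[n] x ≠ x := by
  obtain ⟨hf0, hf1, m, a, hm, ha0, ham, hlt, -, hslope⟩ := hf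
  have hNpos : (0 : ℝ) < (N : ℝ) := by
    exact_mod_cast lt_of_lt_of_le (by norm_num) hN
  -- a is (weakly) monotone up to m
  have hamono : ∀ j ≤ m, ∀ i ≤ j, a i ≤ a j := by
    intro j hj
    induction j with
    | zero => intro i hi; simp [Nat.le_zero.mp hi]
    | succ j ih =>
        intro i hi
        rcases Nat.lt_succ_iff_lt_or_eq.mp (Nat.lt_succ_of_le hi) with h | h
        · exact le_trans (ih (le_trans (Nat.le_succ j) hj) i (Nat.lt_succ_iff.mp h))
            (le_of_lt (hlt j (Nat.lt_of_succ_le hj)))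
        · exact le_of_eq (by rw [h])
  -- f is strictly monotone on each initial segment
  have hsm : ∀ j ≤ m, StrictMonoOn f (Set.Icc (a 0) (a j)) := by
    intro j hj
    induction j with
    | zero =>
        intro x hx y hy hxy
        exact absurd hxy (by simp only [Set.mem_Icc] at hx hy; push_neg; linarith [hx.1, hx.2, hy.1, hy.2])
    | succ j ih =>
        have hjm : j < m := Nat.lt_of_succ_le hj
        have ihj := ih (le_of_lt hjm)
        obtain ⟨q, hq⟩ := hslope j hjm
        have hqpos : (0 : ℝ) < (N : ℝ) ^ q := zpow_pos hNpos q
        have ha0j : a 0 ≤ a j := hamono j (le_of_lt hjm) 0 (Nat.zero_le j)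
        have hjj1 : a j < a (j + 1) := hlt j hjm
        intro x hx y hy hxy
        simp only [Set.mem_Icc] at hx hy
        rcases le_or_gt y (a j) with hyle | hygt
        · exact ihj ⟨hx.1, le_trans (le_of_lt hxy) hyle⟩ ⟨hy.1, hyle⟩ hxy
        · rcases le_or_gt (a j) x with hxge | hxlt
          · rw [hq x ⟨hxge, hx.2⟩, hq y ⟨le_of_lt hygt, hy.2⟩]; nlinarith
          · have h1 : f x < f (a j) := ihj ⟨hx.1, hxlt.le⟩ ⟨ha0j, le_rfl⟩ hxlt
            have h2 : f (a j) < f y := by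
              rw [hq y ⟨hygt.le, hy.2⟩]; nlinarith
            exact h1.trans h2
  have hsm01 : StrictMonoOn f (Set.Icc (0 : ℝ) 1) := by
    have := hsm m le_rfl
    rwa [ha0, ham] at this
  have h0mem : (0 : ℝ) ∈ Set.Icc (0 : ℝ) 1 := by norm_num
  have h1mem : (1 : ℝ) ∈ Set.Icc (0 : ℝ) 1 := by norm_num
  have hmap : ∀ x ∈ Set.Icc (0 : ℝ) 1, f x ∈ Set.Icc (0 : ℝ) 1 := by
    intro x hx
    constructor
    · calc (0 : ℝ) = f 0 := hf0.symm
        _ ≤ f x := hsm01.monotoneOn h0mem hx hx.1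
    · calc f x ≤ f 1 := hsm01.monotoneOn hx h1mem hx.2
        _ = 1 := hf1
  obtain ⟨x₀, hx₀, hfx⟩ := hne
  intro n hn
  refine ⟨x₀, hx₀, ?_⟩
  rcases lt_or_gt_of_ne hfx with hgt | hlt'
  · -- f x₀ < x₀ : iterates decrease
    have key : ∀ k, 1 ≤ k → f^[k] x₀ ∈ Set.Icc (0 : ℝ) 1 ∧ f^[k] x₀ < x₀ := by
      intro k hk
      induction k with
      | zero => omega
      | succ k ih =>
          rcases Nat.eq_or_lt_of_le hk with h | h
          · simp only [← h, Function.iterate_one]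
            exact ⟨hmap x₀ hx₀, hgt⟩
          · have ih' := ih (Nat.lt_succ_iff.mp h)
            rw [Function.iterate_succ_apply']
            refine ⟨hmap _ ih'.1, ?_⟩
            calc f (f^[k] x₀) < f x₀ := hsm01 ih'.1 hx₀ ih'.2
              _ < x₀ := hgt
    exact ne_of_lt (key n hn).2
  · have key : ∀ k, 1 ≤ k → f^[k] x₀ ∈ Set.Icc (0 : ℝ) 1 ∧ x₀ < f^[k] x₀ := by
      intro k hk
      induction k with
      | zero => omega
      | succ k ih =>
          rcases Nat.eq_or_lt_of_le hk with h | h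
          · simp only [← h, Function.iterate_one]
            exact ⟨hmap x₀ hx₀, hlt'⟩
          · have ih' := ih (Nat.lt_succ_iff.mp h)
            rw [Function.iterate_succ_apply']
            refine ⟨hmap _ ih'.1, ?_⟩
            calc x₀ < f x₀ := hlt'
              _ < f (f^[k] x₀) := hsm01 hx₀ ih'.1 ih'.2
    exact ne_of_gt (key n hn).2
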